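/- For every weighted graph G and every θ ∈ ℝ, the frontier ∂0_{θ,G} is contained in ∞_{θ,G}: every vertex i that is not θ-essential but has a θ-essential neighbor satisfies m_θ(G∖i) = m_θ(G) + 1. -/

import Mathlib

open Polynomial
open scoped Classical

/-- A matching of the weighted graph with edge weights `lam`, inside the vertex set `A`:
a set of pairs `(j,k)` with `j < k`, `lam j k ≠ 0`, endpoints in `A`,
no two pairs sharing a vertex. -/
def IsMatching {n : ℕ} (lam : Fin n → Fin n → ℝ) (A : Finset (Fin n))
    (M : Finset (Fin n × Fin n)) : Prop :=
  (∀ e ∈ M, e.1 < e.2 ∧ lam e.1 e.2 ≠ 0 ∧ e.1 ∈ A ∧ e.2 ∈ A) ∧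
  ∀ e ∈ M, ∀ f ∈ M, e ≠ f → e.1 ≠ f.1 ∧ e.1 ≠ f.2 ∧ e.2 ≠ f.1 ∧ e.2 ≠ f.2

/-- The vertices covered by a matching. -/
def mVerts {n : ℕ} (M : Finset (Fin n × Fin n)) : Finset (Fin n) :=
  M.image Prod.fst ∪ M.image Prod.snd

/-- The finite set of matchings inside the vertex set `A`. -/
noncomputable def matchings {n : ℕ} (lam : Fin n → Fin n → ℝ) (A : Finset (Fin n)) :
    Finset (Finset (Fin n × Fin n)) :=
  Finset.univ.filter fun M => IsMatching lam A M

/-- The weighted matching polynomial of the induced weighted subgraph on the vertex set `A`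
(the matching polynomial of the empty graph is `1`). -/
noncomputable def mu {n : ℕ} (r : Fin n → ℝ) (lam : Fin n → Fin n → ℝ)
    (A : Finset (Fin n)) : Polynomial ℝ :=
  ∑ M ∈ matchings lam A,
    (∏ i ∈ A \ mVerts M, (X - C (r i))) * C (∏ e ∈ M, lam e.1 e.2)

/-- The multivariate matching polynomial evaluated at the complex numbers `x 1, …, x n`. -/
noncomputable def muC {n : ℕ} (lam : Fin n → Fin n → ℝ) (x : Fin n → ℂ) : ℂ :=
  ∑ M ∈ matchings lam (Finset.univ : Finset (Fin n)),
    (∏ i ∈ Finset.univ \ mVerts M, x i) * ∏ e ∈ M, (lam e.1 e.2 : ℂ)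

/-- The constant `B_G`: for `n ≥ 3` the maximum over vertices `j` and sets
`A ⊆ [n] ∖ {j}` with `|A| = n - 2` of `∑_{k ∈ A} (-λ_{jk})`; `-λ_{12}/4` for `n = 2`;
`0` for `n = 1`. -/
noncomputable def BG (n : ℕ) (lam : Fin n → Fin n → ℝ) : ℝ :=
  if 3 ≤ n then
    sSup {S : ℝ | ∃ j : Fin n, ∃ A : Finset (Fin n),
      j ∉ A ∧ A.card = n - 2 ∧ S = ∑ k ∈ A, -lam j k}
  else if h : n = 2 then -lam ⟨0, by omega⟩ ⟨1, by omega⟩ / 4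
  else 0

/-- `l` is a path from `i` to `j` inside the vertex set `A`: a nonempty list of distinct
vertices of `A`, starting at `i`, ending at `j`, with consecutive vertices joined by
edges of nonzero weight. -/
def IsPathIn {n : ℕ} (lam : Fin n → Fin n → ℝ) (A : Finset (Fin n)) (i j : Fin n)
    (l : List (Fin n)) : Prop :=
  l ≠ [] ∧ l.Nodup ∧ (∀ v ∈ l, v ∈ A) ∧ l.head? = some i ∧ l.getLast? = some j ∧
    l.Chain' fun u v => lam u v ≠ 0

/-- `λ_c`: the product of `-λ_e` over the edges `e` of the path `c` (equal to `1` for a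
trivial path). -/
def pathWeight {n : ℕ} (lam : Fin n → Fin n → ℝ) (l : List (Fin n)) : ℝ :=
  ((l.zip l.tail).map fun p => -lam p.1 p.2).prod

/-- A real polynomial viewed as a rational function. -/
noncomputable def toRF (p : Polynomial ℝ) : RatFunc ℝ :=
  algebraMap (Polynomial ℝ) (RatFunc ℝ) p

/-- The graph continued fraction `α_v = μ(A)/μ(A ∖ v)` as a rational function. -/
noncomputable def alpha {n : ℕ} (r : Fin n → ℝ) (lam : Fin n → Fin n → ℝ) (v : Fin n)
    (A : Finset (Fin n)) : RatFunc ℝ :=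
  toRF (mu r lam A) / toRF (mu r lam (A.erase v))

/-- `λ_{i∼j} = -(∑_{c ∈ [i→j]} λ_c · μ(A∖c)²) / μ(A∖{i,j})²` as a rational function. -/
noncomputable def lamSim {n : ℕ} (r : Fin n → ℝ) (lam : Fin n → Fin n → ℝ) (i j : Fin n)
    (A : Finset (Fin n)) : RatFunc ℝ :=
  -(∑ᶠ l ∈ {l : List (Fin n) | IsPathIn lam A i j l},
      toRF (C (pathWeight lam l) * mu r lam (A \ l.toFinset) ^ 2)) /
    toRF (mu r lam ((A.erase i).erase j)) ^ 2

/-- The value of a rational function at `θ`, taken after cancelling common factors;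
`none` encodes the value `∞` (a pole). -/
noncomputable def valAt (f : RatFunc ℝ) (θ : ℝ) : Option ℝ :=
  if f.denom.eval θ = 0 then none else some (f.num.eval θ / f.denom.eval θ)

/-- The set `0_{θ,A}` of θ-essential vertices: `m_θ(A∖v) = m_θ(A) - 1`. -/
def zeroSet {n : ℕ} (r : Fin n → ℝ) (lam : Fin n → Fin n → ℝ) (θ : ℝ)
    (A : Finset (Fin n)) : Set (Fin n) :=
  {v | v ∈ A ∧
    (mu r lam A).rootMultiplicity θ = (mu r lam (A.erase v)).rootMultiplicity θ + 1}

/-- The set `∞_{θ,A}`: `m_θ(A∖v) = m_θ(A) + 1`. -/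
def infSet {n : ℕ} (r : Fin n → ℝ) (lam : Fin n → Fin n → ℝ) (θ : ℝ)
    (A : Finset (Fin n)) : Set (Fin n) :=
  {v | v ∈ A ∧
    (mu r lam (A.erase v)).rootMultiplicity θ = (mu r lam A).rootMultiplicity θ + 1}

/-- The set `+_{θ,A}`: `m_θ(A∖v) = m_θ(A)` and `α_v(A)(θ) > 0`. -/
def plusSet {n : ℕ} (r : Fin n → ℝ) (lam : Fin n → Fin n → ℝ) (θ : ℝ)
    (A : Finset (Fin n)) : Set (Fin n) :=
  {v | v ∈ A ∧
    (mu r lam (A.erase v)).rootMultiplicity θ = (mu r lam A).rootMultiplicity θ ∧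
    ∃ t : ℝ, valAt (alpha r lam v A) θ = some t ∧ 0 < t}

/-- The set `−_{θ,A}`: `m_θ(A∖v) = m_θ(A)` and `α_v(A)(θ) < 0`. -/
def minusSet {n : ℕ} (r : Fin n → ℝ) (lam : Fin n → Fin n → ℝ) (θ : ℝ)
    (A : Finset (Fin n)) : Set (Fin n) :=
  {v | v ∈ A ∧
    (mu r lam (A.erase v)).rootMultiplicity θ = (mu r lam A).rootMultiplicity θ ∧
    ∃ t : ℝ, valAt (alpha r lam v A) θ = some t ∧ t < 0}

/-- The frontier `∂0_{θ,A}`: vertices not in `0_{θ,A}` with a neighbor in `0_{θ,A}`. -/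
def frontierZero {n : ℕ} (r : Fin n → ℝ) (lam : Fin n → Fin n → ℝ) (θ : ℝ)
    (A : Finset (Fin n)) : Set (Fin n) :=
  {v | v ∈ A ∧ v ∉ zeroSet r lam θ A ∧ ∃ w ∈ zeroSet r lam θ A, lam v w ≠ 0}

/-- The underlying simple graph: edges are the pairs with nonzero edge weight. -/
def wGraph {n : ℕ} (lam : Fin n → Fin n → ℝ) : SimpleGraph (Fin n) :=
  SimpleGraph.fromRel fun j k => lam j k ≠ 0

/-!
Let `w` be a θ-essential neighbour of `i` and write `f = μ(G)`, `g = μ(G ∖ i)`, `p = μ(G ∖ w)`,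
`q = μ(G ∖ {i, w})`, `m = m_θ(f)`. Every ratio `μ(A) / μ(A ∖ v)` maps the upper half-plane into
itself, so deleting a vertex changes a root multiplicity by at most one: `m_θ(g) ∈ {m, m + 1}`,
`m_θ(p) = m - 1` and `m_θ(q) ≤ m`. Expanding `μ` at `i` gives `g p - f q ≥ -λ_{iw} q² ≥ 0` on `ℝ`.
If `m_θ(g) = m`, then `g p - f q` vanishes at `θ` either to the odd order `2m - 1` (if
`m_θ(q) = m`), impossible for a nonnegative polynomial, or to order `m + m_θ(q) > 2 m_θ(q)`,
impossible for a polynomial bounded below by `-λ_{iw} q²`.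
-/

section Matchings

variable {n : ℕ} {lam : Fin n → Fin n → ℝ} {A : Finset (Fin n)} {M : Finset (Fin n × Fin n)}
  {v j : Fin n}

lemma mem_matchings : M ∈ matchings lam A ↔ IsMatching lam A M := by
  simp [matchings]

lemma mem_mVerts : v ∈ mVerts M ↔ ∃ e ∈ M, e.1 = v ∨ e.2 = v := by
  simp only [mVerts, Finset.mem_union, Finset.mem_image]
  aesop

lemma mVerts_insert (e : Fin n × Fin n) :
    mVerts (insert e M) = insert e.1 (insert e.2 (mVerts M)) := by
  ext x
  simp only [mem_mVerts, Finset.mem_insert, exists_eq_or_imp]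
  grind

lemma IsMatching.mVerts_subset (hM : IsMatching lam A M) : mVerts M ⊆ A := by
  intro x hx
  obtain ⟨e, he, rfl | rfl⟩ := mem_mVerts.1 hx
  exacts [(hM.1 e he).2.2.1, (hM.1 e he).2.2.2]

lemma IsMatching.eq_of_mem_of_mem (hM : IsMatching lam A M) {e f : Fin n × Fin n}
    (he : e ∈ M) (hf : f ∈ M) (hev : e.1 = v ∨ e.2 = v) (hfv : f.1 = v ∨ f.2 = v) : e = f := by
  by_contra hne
  have := hM.2 e he f hf hne
  rcases hev with rfl | rfl <;> rcases hfv with h | h <;> simp_all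

lemma matchings_empty : matchings lam (∅ : Finset (Fin n)) = {∅} := by
  ext M
  simp only [mem_matchings, Finset.mem_singleton]
  refine ⟨fun hM => Finset.eq_empty_of_forall_notMem fun e he => ?_, ?_⟩
  · simpa using (hM.1 e he).2.2.1
  · rintro rfl
    exact ⟨by simp, by simp⟩

lemma mu_empty (r : Fin n → ℝ) : mu r lam (∅ : Finset (Fin n)) = 1 := by
  simp [mu, matchings_empty]

/-- The edge `{v, j}` in the representation `(min, max)` used by `IsMatching`. -/
def sortedPair (v j : Fin n) : Fin n × Fin n := if v < j then (v, j) else (j, v)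

lemma sortedPair_cases (v j : Fin n) :
    (sortedPair v j).1 = v ∧ (sortedPair v j).2 = j ∨
      (sortedPair v j).1 = j ∧ (sortedPair v j).2 = v := by
  unfold sortedPair; split <;> simp

lemma sortedPair_touches (v j : Fin n) : (sortedPair v j).1 = v ∨ (sortedPair v j).2 = v := by
  rcases sortedPair_cases v j with h | h <;> simp [h]

lemma lam_sortedPair (hsym : ∀ j k, lam j k = lam k j) (v j : Fin n) :
    lam (sortedPair v j).1 (sortedPair v j).2 = lam v j := by
  rcases sortedPair_cases v j with ⟨h1, h2⟩ | ⟨h1, h2⟩ <;> simp only [h1, h2, hsym j v]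

lemma sortedPair_fst_lt_snd (hne : v ≠ j) : (sortedPair v j).1 < (sortedPair v j).2 := by
  unfold sortedPair; split <;> simp only <;> omega

lemma sortedPair_injective (v : Fin n) : Function.Injective (sortedPair v) := by
  intro j j' h
  rcases sortedPair_cases v j with ⟨h1, h2⟩ | ⟨h1, h2⟩ <;>
    rcases sortedPair_cases v j' with ⟨h1', h2'⟩ | ⟨h1', h2'⟩ <;>
    rw [h] at h1 h2 <;> grind

lemma mVerts_insert_sortedPair :
    mVerts (insert (sortedPair v j) M) = insert v (insert j (mVerts M)) := by
  rw [mVerts_insert]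
  rcases sortedPair_cases v j with ⟨h1, h2⟩ | ⟨h1, h2⟩
  · rw [h1, h2]
  · rw [h1, h2, Finset.insert_comm]

lemma sortedPair_mem_of_mem_mVerts (hM : IsMatching lam A M) (hv : v ∈ mVerts M) :
    ∃ j ∈ A.erase v, sortedPair v j ∈ M := by
  obtain ⟨e, he, hev⟩ := mem_mVerts.1 hv
  obtain ⟨hlt, -, h1, h2⟩ := hM.1 e he
  rcases hev with rfl | rfl
  · refine ⟨e.2, Finset.mem_erase.2 ⟨hlt.ne', h2⟩, ?_⟩
    rwa [sortedPair, if_pos hlt]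
  · refine ⟨e.1, Finset.mem_erase.2 ⟨hlt.ne, h1⟩, ?_⟩
    rwa [sortedPair, if_neg hlt.not_gt]

lemma IsMatching.insert_sortedPair (hsym : ∀ j k, lam j k = lam k j) (hv : v ∈ A)
    (hj : j ∈ A.erase v) (hvj : lam v j ≠ 0) (hM : IsMatching lam ((A.erase v).erase j) M) :
    IsMatching lam A (insert (sortedPair v j) M) := by
  obtain ⟨hjv, hjA⟩ := Finset.mem_erase.1 hj
  have hends := sortedPair_cases v j
  have avoid : ∀ f ∈ M, f.1 ≠ v ∧ f.2 ≠ v ∧ f.1 ≠ j ∧ f.2 ≠ j := fun f hf => by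
    obtain ⟨-, -, h1, h2⟩ := hM.1 f hf
    simp only [Finset.mem_erase] at h1 h2
    exact ⟨h1.2.1, h2.2.1, h1.1, h2.1⟩
  constructor
  · intro e he
    rcases Finset.mem_insert.1 he with rfl | he
    · refine ⟨sortedPair_fst_lt_snd hjv.symm, by rwa [lam_sortedPair hsym], ?_⟩
      rcases hends with ⟨h1, h2⟩ | ⟨h1, h2⟩ <;> simp [h1, h2, hv, hjA]
    · obtain ⟨hlt, hl, h1, h2⟩ := hM.1 e he
      exact ⟨hlt, hl, Finset.mem_of_mem_erase (Finset.mem_of_mem_erase h1),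
        Finset.mem_of_mem_erase (Finset.mem_of_mem_erase h2)⟩
  · intro e he f hf hef
    rcases Finset.mem_insert.1 he with rfl | he <;> rcases Finset.mem_insert.1 hf with rfl | hf
    · exact absurd rfl hef
    · have := avoid f hf
      rcases hends with ⟨h1, h2⟩ | ⟨h1, h2⟩ <;> rw [h1, h2] <;> grind
    · have := avoid e he
      rcases hends with ⟨h1, h2⟩ | ⟨h1, h2⟩ <;> rw [h1, h2] <;> grind
    · exact hM.2 e he f hf hef

lemma IsMatching.erase_sortedPair (hM : IsMatching lam A M) (he : sortedPair v j ∈ M) :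
    IsMatching lam ((A.erase v).erase j) (M.erase (sortedPair v j)) := by
  refine ⟨fun f hf => ?_, fun f hf g hg => hM.2 f (Finset.mem_of_mem_erase hf) g
    (Finset.mem_of_mem_erase hg)⟩
  obtain ⟨hfe, hfM⟩ := Finset.mem_erase.1 hf
  obtain ⟨hlt, hl, h1, h2⟩ := hM.1 f hfM
  have := hM.2 _ he f hfM (Ne.symm hfe)
  simp only [Finset.mem_erase]
  rcases sortedPair_cases v j with ⟨e1, e2⟩ | ⟨e1, e2⟩ <;> rw [e1, e2] at this <;> grind

lemma sortedPair_notMem (hM : IsMatching lam ((A.erase v).erase j) M) :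
    sortedPair v j ∉ M := fun he => by
  have hv : v ∈ mVerts M := mem_mVerts.2 ⟨_, he, sortedPair_touches v j⟩
  simpa using hM.mVerts_subset hv

variable (r : Fin n → ℝ)

noncomputable def matchingTerm (lam : Fin n → Fin n → ℝ) (A : Finset (Fin n))
    (M : Finset (Fin n × Fin n)) : Polynomial ℝ :=
  (∏ i ∈ A \ mVerts M, (X - C (r i))) * C (∏ e ∈ M, lam e.1 e.2)

lemma mu_eq_sum_matchingTerm : mu r lam A = ∑ M ∈ matchings lam A, matchingTerm r lam A M := rfl

lemma matchingTerm_of_notMem_mVerts (hv : v ∈ A) (hM : IsMatching lam (A.erase v) M) :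
    matchingTerm r lam A M = (X - C (r v)) * matchingTerm r lam (A.erase v) M := by
  have hvW : v ∉ mVerts M := fun h => by simpa using hM.mVerts_subset h
  have hsdiff : A \ mVerts M = insert v (A.erase v \ mVerts M) := by
    rw [Finset.erase_sdiff_comm, Finset.insert_erase (Finset.mem_sdiff.2 ⟨hv, hvW⟩)]
  rw [matchingTerm, matchingTerm, hsdiff, Finset.prod_insert (by simp), mul_assoc]

lemma matchingTerm_insert_sortedPair (hsym : ∀ j k, lam j k = lam k j)
    (hM : IsMatching lam ((A.erase v).erase j) M) :
    matchingTerm r lam A (insert (sortedPair v j) M) =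
      C (lam v j) * matchingTerm r lam ((A.erase v).erase j) M := by
  have hsdiff : A \ mVerts (insert (sortedPair v j) M) = (A.erase v).erase j \ mVerts M := by
    ext x
    simp only [mVerts_insert_sortedPair, Finset.mem_sdiff, Finset.mem_insert, Finset.mem_erase]
    tauto
  rw [matchingTerm, matchingTerm, hsdiff, Finset.prod_insert (sortedPair_notMem hM),
    lam_sortedPair hsym, map_mul]
  ring

lemma sum_matchingTerm_filter_sortedPair_mem (hsym : ∀ j k, lam j k = lam k j) (hv : v ∈ A)
    (hj : j ∈ A.erase v) :
    ∑ M ∈ (matchings lam A).filter (sortedPair v j ∈ ·), matchingTerm r lam A M =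
      C (lam v j) * mu r lam ((A.erase v).erase j) := by
  by_cases hvj : lam v j = 0
  · have hempty : (matchings lam A).filter (sortedPair v j ∈ ·) = ∅ :=
      Finset.filter_false_of_mem fun M hM he => by
        simpa [lam_sortedPair hsym, hvj] using ((mem_matchings.1 hM).1 _ he).2.1
    simp [hempty, hvj]
  rw [mu_eq_sum_matchingTerm, Finset.mul_sum]
  symm
  refine Finset.sum_nbij' (insert (sortedPair v j)) (Finset.erase · (sortedPair v j))
    ?_ ?_ ?_ ?_ ?_
  · intro M hM
    have hM := mem_matchings.1 hM
    exact Finset.mem_filter.2 ⟨mem_matchings.2 (hM.insert_sortedPair hsym hv hj hvj),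
      Finset.mem_insert_self _ _⟩
  · intro M hM
    obtain ⟨hM, he⟩ := Finset.mem_filter.1 hM
    exact mem_matchings.2 ((mem_matchings.1 hM).erase_sortedPair he)
  · exact fun M hM => Finset.erase_insert (sortedPair_notMem (mem_matchings.1 hM))
  · exact fun M hM => Finset.insert_erase (Finset.mem_filter.1 hM).2
  · exact fun M hM => (matchingTerm_insert_sortedPair r hsym (mem_matchings.1 hM)).symm

lemma filter_mem_mVerts_matchings (v : Fin n) :
    (matchings lam A).filter (v ∈ mVerts ·) =
      (A.erase v).biUnion fun j => (matchings lam A).filter (sortedPair v j ∈ ·) := by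
  ext M
  simp only [Finset.mem_filter, Finset.mem_biUnion]
  constructor
  · rintro ⟨hM, hv⟩
    obtain ⟨j, hj, he⟩ := sortedPair_mem_of_mem_mVerts (mem_matchings.1 hM) hv
    exact ⟨j, hj, hM, he⟩
  · rintro ⟨j, -, hM, he⟩
    exact ⟨hM, mem_mVerts.2 ⟨_, he, sortedPair_touches v j⟩⟩

lemma filter_notMem_mVerts_matchings (v : Fin n) :
    (matchings lam A).filter (v ∉ mVerts ·) = matchings lam (A.erase v) := by
  ext M
  simp only [Finset.mem_filter, mem_matchings]
  constructor
  · rintro ⟨hM, hvM⟩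
    refine ⟨fun e he => ?_, hM.2⟩
    obtain ⟨hlt, hl, h1, h2⟩ := hM.1 e he
    have hne : e.1 ≠ v ∧ e.2 ≠ v := ⟨fun h => hvM (mem_mVerts.2 ⟨e, he, Or.inl h⟩),
      fun h => hvM (mem_mVerts.2 ⟨e, he, Or.inr h⟩)⟩
    exact ⟨hlt, hl, Finset.mem_erase.2 ⟨hne.1, h1⟩, Finset.mem_erase.2 ⟨hne.2, h2⟩⟩
  · intro hM
    refine ⟨⟨fun e he => ?_, hM.2⟩, fun h => by simpa using hM.mVerts_subset h⟩
    obtain ⟨hlt, hl, h1, h2⟩ := hM.1 e he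
    exact ⟨hlt, hl, Finset.mem_of_mem_erase h1, Finset.mem_of_mem_erase h2⟩

/-- Split the matchings according to whether `v` is uncovered or matched to `j`. -/
theorem mu_eq_of_mem (hsym : ∀ j k, lam j k = lam k j) (hv : v ∈ A) :
    mu r lam A = (X - C (r v)) * mu r lam (A.erase v) +
      ∑ j ∈ A.erase v, C (lam v j) * mu r lam ((A.erase v).erase j) := by
  have hdisj : Set.PairwiseDisjoint ↑(A.erase v)
      fun j => (matchings lam A).filter (sortedPair v j ∈ ·) := by
    intro j _ j' _ hjj'
    refine Finset.disjoint_filter.2 fun M hM he he' => hjj' (sortedPair_injective v ?_)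
    exact (mem_matchings.1 hM).eq_of_mem_of_mem he he' (sortedPair_touches v j)
      (sortedPair_touches v j')
  rw [mu_eq_sum_matchingTerm, ← Finset.sum_filter_not_add_sum_filter _ (v ∈ mVerts ·),
    filter_notMem_mVerts_matchings, filter_mem_mVerts_matchings, Finset.sum_biUnion hdisj,
    mu_eq_sum_matchingTerm, Finset.mul_sum]
  congr 1
  · exact Finset.sum_congr rfl fun M hM =>
      matchingTerm_of_notMem_mVerts r hv (mem_matchings.1 hM)
  · exact Finset.sum_congr rfl fun j hj => sum_matchingTerm_filter_sortedPair_mem r hsym hv hj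

end Matchings

def IsHerglotzRatio (f g : Polynomial ℝ) : Prop :=
  ∀ z : ℂ, 0 < z.im → 0 < (aeval z f / aeval z g).im

namespace IsHerglotzRatio

variable {f g : Polynomial ℝ}

lemma aeval_left_ne_zero (h : IsHerglotzRatio f g) {z : ℂ} (hz : 0 < z.im) : aeval z f ≠ 0 :=
  fun h0 => by simpa [h0] using h z hz

lemma aeval_right_ne_zero (h : IsHerglotzRatio f g) {z : ℂ} (hz : 0 < z.im) : aeval z g ≠ 0 :=
  fun h0 => by simpa [h0] using h z hz

lemma left_ne_zero (h : IsHerglotzRatio f g) : f ≠ 0 :=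
  fun h0 => h.aeval_left_ne_zero (z := Complex.I) (by simp) (by simp [h0])

lemma right_ne_zero (h : IsHerglotzRatio f g) : g ≠ 0 :=
  fun h0 => h.aeval_right_ne_zero (z := Complex.I) (by simp) (by simp [h0])

lemma neg_swap (h : IsHerglotzRatio f g) : IsHerglotzRatio (-g) f := by
  intro z hz
  have hfg : aeval z f / aeval z g ≠ 0 :=
    div_ne_zero (h.aeval_left_ne_zero hz) (h.aeval_right_ne_zero hz)
  rw [map_neg, neg_div, Complex.neg_im, ← inv_div, Complex.inv_im, neg_div, neg_neg]
  exact div_pos (h z hz) (Complex.normSq_pos.2 hfg)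

end IsHerglotzRatio

lemma im_ofReal_mul_inv_nonneg {c : ℝ} (hc : c ≤ 0) {w : ℂ} (hw : 0 < w.im) :
    0 ≤ ((c : ℂ) * w⁻¹).im := by
  rw [Complex.im_ofReal_mul, Complex.inv_im]
  exact mul_nonneg_of_nonpos_of_nonpos hc
    (div_nonpos_of_nonpos_of_nonneg (by linarith) (Complex.normSq_nonneg w))

section RootMultiplicity

open Filter Topology

variable {f g p q : Polynomial ℝ} {θ : ℝ}

lemma aeval_eq_pow_rootMultiplicity_mul {B : Type*} [CommRing B] [Algebra ℝ B] (p : Polynomial ℝ)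
    (θ : ℝ) (z : B) :
    aeval z p = (z - algebraMap ℝ B θ) ^ p.rootMultiplicity θ *
      aeval z (p /ₘ (X - C θ) ^ p.rootMultiplicity θ) := by
  conv_lhs => rw [← p.pow_mul_divByMonic_rootMultiplicity_eq θ]
  simp

lemma eval_eq_pow_rootMultiplicity_mul (p : Polynomial ℝ) (θ x : ℝ) :
    p.eval x = (x - θ) ^ p.rootMultiplicity θ *
      (p /ₘ (X - C θ) ^ p.rootMultiplicity θ).eval x := by
  simpa using aeval_eq_pow_rootMultiplicity_mul p θ x

lemma exists_im_pos_im_pow_mul_neg {d : ℕ} (hd : 2 ≤ d) {c : ℝ} (hc : c ≠ 0) :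
    ∃ u : ℂ, 0 < u.im ∧ (u ^ d * c).im < 0 := by
  have hd0 : (0 : ℝ) < d := by positivity
  have hpid : Real.pi * 2 ≤ Real.pi * d :=
    mul_le_mul_of_nonneg_left (by exact_mod_cast hd) Real.pi_pos.le
  suffices ∃ φ, 0 < φ ∧ φ < Real.pi ∧ Real.sin (d * φ) * c < 0 by
    obtain ⟨φ, hφ0, hφπ, hsin⟩ := this
    refine ⟨Complex.exp (φ * Complex.I), ?_, ?_⟩
    · rw [Complex.exp_ofReal_mul_I_im]
      exact Real.sin_pos_of_pos_of_lt_pi hφ0 hφπ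
    · rw [← Complex.exp_nat_mul, ← mul_assoc, ← Complex.ofReal_natCast, ← Complex.ofReal_mul,
        Complex.im_mul_ofReal, Complex.exp_ofReal_mul_I_im]
      exact hsin
  rcases hc.lt_or_gt with hneg | hpos
  · refine ⟨Real.pi / 2 / d, by positivity, ?_, ?_⟩
    · rw [div_lt_iff₀ hd0]
      linarith [Real.pi_pos]
    · rw [mul_div_cancel₀ _ hd0.ne', Real.sin_pi_div_two, one_mul]
      exact hneg
  · refine ⟨(Real.pi / 2 + Real.pi) / d, by positivity, ?_, ?_⟩
    · rw [div_lt_iff₀ hd0]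
      linarith [Real.pi_pos]
    · rw [mul_div_cancel₀ _ hd0.ne', Real.sin_add_pi, Real.sin_pi_div_two]
      linarith

lemma tendsto_aeval_div_aeval (f g : Polynomial ℝ) (θ : ℝ) (u : ℂ) (hg : g.eval θ ≠ 0) :
    Tendsto (fun t : ℝ => aeval (θ + t * u : ℂ) f / aeval (θ + t * u : ℂ) g) (𝓝 0)
      (𝓝 ((f.eval θ / g.eval θ : ℝ) : ℂ)) := by
  have hray : Continuous fun t : ℝ => (θ + t * u : ℂ) := by fun_prop
  have hlim : ∀ p : Polynomial ℝ,
      Tendsto (fun t : ℝ => aeval (θ + t * u : ℂ) p) (𝓝 0) (𝓝 ((p.eval θ : ℝ) : ℂ)) := fun p => by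
    have h0 := (p.continuous_aeval.comp hray).tendsto 0
    simp only [Function.comp_def, Complex.ofReal_zero, zero_mul, add_zero] at h0
    rwa [← Complex.coe_algebraMap, ← aeval_algebraMap_apply_eq_algebraMap_eval]
  push_cast
  exact (hlim f).div (hlim g) (by exact_mod_cast hg)

/-- Near a zero of order `d ≥ 2` of `f / g`, the `d`-fold rotation of a suitable ray in the upper
half-plane sends `f / g` into the lower half-plane. -/
theorem IsHerglotzRatio.rootMultiplicity_le (h : IsHerglotzRatio f g) :
    f.rootMultiplicity θ ≤ g.rootMultiplicity θ + 1 := by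
  by_contra! hlt
  set a := f.rootMultiplicity θ
  set b := g.rootMultiplicity θ
  set f₁ := f /ₘ (X - C θ) ^ a
  set g₁ := g /ₘ (X - C θ) ^ b
  have hf₁ : f₁.eval θ ≠ 0 := eval_divByMonic_pow_rootMultiplicity_ne_zero θ h.left_ne_zero
  have hg₁ : g₁.eval θ ≠ 0 := eval_divByMonic_pow_rootMultiplicity_ne_zero θ h.right_ne_zero
  obtain ⟨u, hu, hneg⟩ := exists_im_pos_im_pow_mul_neg (d := a - b) (by omega)
    (div_ne_zero hf₁ hg₁)
  have hlim := (Complex.continuous_im.tendsto _).comp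
    ((tendsto_aeval_div_aeval f₁ g₁ θ u hg₁).const_mul (u ^ (a - b)))
  have hev : ∀ᶠ t : ℝ in 𝓝[>] 0,
      (u ^ (a - b) * (aeval (θ + t * u : ℂ) f₁ / aeval (θ + t * u : ℂ) g₁)).im < 0 :=
    (hlim.eventually (eventually_lt_nhds hneg)).filter_mono nhdsWithin_le_nhds
  obtain ⟨t, hneg_t, ht⟩ := (hev.and self_mem_nhdsWithin).exists
  have ht : (0 : ℝ) < t := ht
  have hz : 0 < (θ + t * u : ℂ).im := by simpa using mul_pos ht hu
  have hratio : aeval (θ + t * u : ℂ) f / aeval (θ + t * u : ℂ) g =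
      ((t ^ (a - b) : ℝ) : ℂ) *
        (u ^ (a - b) * (aeval (θ + t * u : ℂ) f₁ / aeval (θ + t * u : ℂ) g₁)) := by
    have htu : (t : ℂ) * u ≠ 0 := mul_ne_zero (by exact_mod_cast ht.ne') (by rintro rfl; simp at hu)
    rw [aeval_eq_pow_rootMultiplicity_mul f θ, aeval_eq_pow_rootMultiplicity_mul g θ,
      Complex.coe_algebraMap, add_sub_cancel_left, ← pow_mul_pow_sub _ (by omega : b ≤ a),
      mul_assoc, mul_div_mul_left _ _ (pow_ne_zero b htu)]
    push_cast
    ring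
  have := h _ hz
  rw [hratio, Complex.im_ofReal_mul] at this
  nlinarith [pow_pos ht (a - b)]

lemma rootMultiplicity_neg (p : Polynomial ℝ) (θ : ℝ) :
    (-p).rootMultiplicity θ = p.rootMultiplicity θ := by
  classical
  rw [← count_roots, ← count_roots, roots_neg]

theorem IsHerglotzRatio.rootMultiplicity_right_le (h : IsHerglotzRatio f g) :
    g.rootMultiplicity θ ≤ f.rootMultiplicity θ + 1 := by
  simpa [rootMultiplicity_neg] using h.neg_swap.rootMultiplicity_le (θ := θ)

lemma eval_le_eval_of_forall_gt (h : ∀ x > θ, p.eval x ≤ q.eval x) : p.eval θ ≤ q.eval θ :=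
  le_of_tendsto_of_tendsto (b := 𝓝[>] θ) (p.continuousAt.tendsto.mono_left nhdsWithin_le_nhds)
    (q.continuousAt.tendsto.mono_left nhdsWithin_le_nhds) (eventually_nhdsWithin_of_forall h)

lemma eval_le_eval_of_forall_lt (h : ∀ x < θ, p.eval x ≤ q.eval x) : p.eval θ ≤ q.eval θ :=
  le_of_tendsto_of_tendsto (b := 𝓝[<] θ) (p.continuousAt.tendsto.mono_left nhdsWithin_le_nhds)
    (q.continuousAt.tendsto.mono_left nhdsWithin_le_nhds) (eventually_nhdsWithin_of_forall h)

/-- At a root of odd order `p` changes sign. -/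
theorem even_rootMultiplicity_of_eval_nonneg (hp : p ≠ 0) (h : ∀ x, 0 ≤ p.eval x) :
    Even (p.rootMultiplicity θ) := by
  by_contra hodd
  rw [Nat.not_even_iff_odd] at hodd
  set p₁ := p /ₘ (X - C θ) ^ p.rootMultiplicity θ
  have hfac := eval_eq_pow_rootMultiplicity_mul p θ
  have hright : (0 : Polynomial ℝ).eval θ ≤ p₁.eval θ := eval_le_eval_of_forall_gt fun x hx => by
    have := h x
    rw [hfac] at this
    simpa using nonneg_of_mul_nonneg_right this (pow_pos (sub_pos.2 hx) _)
  have hleft : p₁.eval θ ≤ (0 : Polynomial ℝ).eval θ := eval_le_eval_of_forall_lt fun x hx => by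
    have := h x
    rw [hfac] at this
    simpa using nonpos_of_mul_nonneg_right this (hodd.pow_neg (sub_neg.2 hx))
  exact eval_divByMonic_pow_rootMultiplicity_ne_zero θ hp
    (le_antisymm (by simpa using hleft) (by simpa using hright))

theorem rootMultiplicity_le_of_eval_le (hp : p ≠ 0) (h₀ : ∀ x, 0 ≤ p.eval x)
    (h : ∀ x, p.eval x ≤ q.eval x) : q.rootMultiplicity θ ≤ p.rootMultiplicity θ := by
  by_contra! hlt
  set m := p.rootMultiplicity θ
  set p₁ := p /ₘ (X - C θ) ^ m
  set q₁ := (X - C θ) ^ (q.rootMultiplicity θ - m) * (q /ₘ (X - C θ) ^ q.rootMultiplicity θ)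
  have hq : ∀ x, q.eval x = (x - θ) ^ m * q₁.eval x := fun x => by
    rw [eval_eq_pow_rootMultiplicity_mul q θ, eval_mul, eval_pow, eval_sub, eval_X, eval_C,
      ← mul_assoc, pow_mul_pow_sub _ hlt.le]
  have hnonneg : (0 : Polynomial ℝ).eval θ ≤ p₁.eval θ := eval_le_eval_of_forall_gt fun x hx => by
    have := h₀ x
    rw [eval_eq_pow_rootMultiplicity_mul p θ] at this
    simpa using nonneg_of_mul_nonneg_right this (pow_pos (sub_pos.2 hx) _)
  have hle : p₁.eval θ ≤ q₁.eval θ := eval_le_eval_of_forall_gt fun x hx => by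
    have := h x
    rw [eval_eq_pow_rootMultiplicity_mul p θ, hq] at this
    exact le_of_mul_le_mul_left this (pow_pos (sub_pos.2 hx) _)
  have hq₁ : q₁.eval θ = 0 := by simp [q₁, zero_pow (Nat.sub_ne_zero_of_lt hlt)]
  exact eval_divByMonic_pow_rootMultiplicity_ne_zero θ hp
    (le_antisymm (hq₁ ▸ hle) (by simpa using hnonneg))

lemma min_le_rootMultiplicity_sub (h : p - q ≠ 0) :
    min (p.rootMultiplicity θ) (q.rootMultiplicity θ) ≤ (p - q).rootMultiplicity θ := by
  rw [sub_eq_add_neg] at h ⊢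
  simpa [rootMultiplicity_neg] using rootMultiplicity_add θ h

lemma rootMultiplicity_sub_of_lt (hp : p ≠ 0)
    (hlt : p.rootMultiplicity θ < q.rootMultiplicity θ) :
    (p - q).rootMultiplicity θ = p.rootMultiplicity θ := by
  have hpq : p - q ≠ 0 := fun h => by rw [sub_eq_zero.1 h] at hlt; omega
  have hle := min_le_rootMultiplicity_sub hpq (θ := θ)
  have hge := min_le_rootMultiplicity_sub (p := p - q) (q := -q) (θ := θ) (by simpa using hp)
  rw [sub_neg_eq_add, sub_add_cancel, rootMultiplicity_neg] at hge
  omega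

theorem rootMultiplicity_ne_of_sq_le_mul_sub_mul {c : ℝ} (hc : 0 < c) (hf : f ≠ 0) (hg : g ≠ 0)
    (hp : p ≠ 0) (hq : q ≠ 0) (hfp : f.rootMultiplicity θ = p.rootMultiplicity θ + 1)
    (hqf : q.rootMultiplicity θ ≤ f.rootMultiplicity θ)
    (hD : ∀ x, c * q.eval x ^ 2 ≤ (g * p - f * q).eval x) :
    g.rootMultiplicity θ ≠ f.rootMultiplicity θ := by
  intro hgf
  set u := C c * q ^ 2
  have hu : u ≠ 0 := mul_ne_zero (C_ne_zero.2 hc.ne') (pow_ne_zero 2 hq)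
  have hu₀ : ∀ x, 0 ≤ u.eval x := fun x => by simp only [u, eval_mul, eval_C, eval_pow]; positivity
  have huD : ∀ x, u.eval x ≤ (g * p - f * q).eval x := fun x => by simpa [u] using hD x
  have hD0 : g * p - f * q ≠ 0 := fun h0 => hu <| Polynomial.funext fun x =>
    le_antisymm (by simpa [h0] using huD x) (by simpa using hu₀ x)
  have hu_mult : u.rootMultiplicity θ = 2 * q.rootMultiplicity θ := by
    classical
    rw [← count_roots, ← count_roots, roots_C_mul _ hc.ne', roots_pow, Multiset.count_nsmul]
  have hle := rootMultiplicity_le_of_eval_le hu hu₀ huD (θ := θ)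
  obtain ⟨k, hk⟩ := even_rootMultiplicity_of_eval_nonneg hD0 (fun x => (hu₀ x).trans (huD x))
    (θ := θ)
  have hgp := rootMultiplicity_mul (x := θ) (mul_ne_zero hg hp)
  have hfq := rootMultiplicity_mul (x := θ) (mul_ne_zero hf hq)
  rcases hqf.lt_or_eq with hlt | heq
  · have := min_le_rootMultiplicity_sub hD0 (θ := θ)
    omega
  · have := rootMultiplicity_sub_of_lt (mul_ne_zero hg hp) (q := f * q) (θ := θ) (by omega)
    omega

end RootMultiplicity

section MatchingPolynomial

variable {n : ℕ} (r : Fin n → ℝ) {lam : Fin n → Fin n → ℝ}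

lemma aeval_mu_ne_zero_of_forall (A : Finset (Fin n))
    (h : ∀ v ∈ A, IsHerglotzRatio (mu r lam A) (mu r lam (A.erase v))) {z : ℂ} (hz : 0 < z.im) :
    aeval z (mu r lam A) ≠ 0 := by
  rcases A.eq_empty_or_nonempty with rfl | ⟨v, hv⟩
  · simp [mu_empty]
  · exact (h v hv).aeval_left_ne_zero hz

/-- The continued fraction `α_v = μ(A) / μ(A ∖ v) = z - r_v + ∑_j λ_{vj} / α_j(A ∖ v)` is a sum
of Herglotz functions, since each `λ_{vj} ≤ 0`. -/
theorem isHerglotzRatio_mu_erase (hsym : ∀ j k, lam j k = lam k j)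
    (hnonpos : ∀ j k, lam j k ≤ 0) {A : Finset (Fin n)} {v : Fin n} (hv : v ∈ A) :
    IsHerglotzRatio (mu r lam A) (mu r lam (A.erase v)) := by
  induction A using Finset.strongInduction generalizing v with
  | _ A ih =>
  intro z hz
  have ihv := fun j (hj : j ∈ A.erase v) => ih (A.erase v) (Finset.erase_ssubset hv) hj z hz
  have hg : aeval z (mu r lam (A.erase v)) ≠ 0 :=
    aeval_mu_ne_zero_of_forall r _ (fun j hj => ih _ (Finset.erase_ssubset hv) hj) hz
  have hexp : aeval z (mu r lam A) / aeval z (mu r lam (A.erase v)) =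
      z - r v + ∑ j ∈ A.erase v, (lam v j : ℂ) *
        (aeval z (mu r lam (A.erase v)) / aeval z (mu r lam ((A.erase v).erase j)))⁻¹ := by
    rw [mu_eq_of_mem r hsym hv]
    simp only [map_add, map_mul, map_sub, map_sum, aeval_X, aeval_C, Complex.coe_algebraMap,
      inv_div, add_div, Finset.sum_div, mul_div_cancel_right₀ _ hg, mul_div_assoc]
  rw [hexp, Complex.add_im, Complex.im_sum, Complex.sub_im, Complex.ofReal_im, sub_zero]
  exact add_pos_of_pos_of_nonneg hz
    (Finset.sum_nonneg fun j hj => im_ofReal_mul_inv_nonneg (hnonpos v j) (ihv j hj))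

lemma mu_ne_zero (hsym : ∀ j k, lam j k = lam k j) (hnonpos : ∀ j k, lam j k ≤ 0)
    (A : Finset (Fin n)) : mu r lam A ≠ 0 := fun h =>
  aeval_mu_ne_zero_of_forall r A (fun _ hv => isHerglotzRatio_mu_erase r hsym hnonpos hv)
    (z := Complex.I) (by simp) (by simp [h])

theorem rootMultiplicity_mu_le_erase (hsym : ∀ j k, lam j k = lam k j)
    (hnonpos : ∀ j k, lam j k ≤ 0) {A : Finset (Fin n)} {v : Fin n} (hv : v ∈ A) (θ : ℝ) :
    (mu r lam A).rootMultiplicity θ ≤ (mu r lam (A.erase v)).rootMultiplicity θ + 1 :=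
  (isHerglotzRatio_mu_erase r hsym hnonpos hv).rootMultiplicity_le

theorem rootMultiplicity_mu_erase_le (hsym : ∀ j k, lam j k = lam k j)
    (hnonpos : ∀ j k, lam j k ≤ 0) {A : Finset (Fin n)} {v : Fin n} (hv : v ∈ A) (θ : ℝ) :
    (mu r lam (A.erase v)).rootMultiplicity θ ≤ (mu r lam A).rootMultiplicity θ + 1 :=
  (isHerglotzRatio_mu_erase r hsym hnonpos hv).rootMultiplicity_right_le

/-- By the Heilmann–Lieb identity this is the sum of `λ_c μ(A ∖ c)²` over the paths `c` from `i`
to `k`. -/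
noncomputable def muCross (lam : Fin n → Fin n → ℝ) (A : Finset (Fin n)) (i k : Fin n) :
    Polynomial ℝ :=
  mu r lam (A.erase i) * mu r lam (A.erase k) - mu r lam A * mu r lam ((A.erase i).erase k)

theorem muCross_eq (hsym : ∀ j k, lam j k = lam k j) {A : Finset (Fin n)} {i k : Fin n}
    (hi : i ∈ A) (hk : k ∈ A) (hik : i ≠ k) :
    muCross r lam A i k = C (-lam i k) * mu r lam ((A.erase i).erase k) ^ 2 +
      ∑ j ∈ (A.erase i).erase k, C (-lam i j) * muCross r lam (A.erase i) j k := by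
  have hA := mu_eq_of_mem r hsym hi
  have hAk := mu_eq_of_mem r hsym (Finset.mem_erase.2 ⟨hik, hi⟩ : i ∈ A.erase k)
  rw [Finset.erase_right_comm] at hAk
  set B := A.erase i
  have hkB : k ∈ B := Finset.mem_erase.2 ⟨hik.symm, hk⟩
  have hsplit := (Finset.add_sum_erase B (fun j => C (lam i j) * mu r lam (B.erase j)) hkB).symm
  have hsum : ∑ j ∈ B.erase k, C (-lam i j) * muCross r lam B j k =
      mu r lam B * ∑ j ∈ B.erase k, C (lam i j) * mu r lam ((B.erase k).erase j) -
        (∑ j ∈ B.erase k, C (lam i j) * mu r lam (B.erase j)) * mu r lam (B.erase k) := by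
    rw [Finset.mul_sum, Finset.sum_mul, ← Finset.sum_sub_distrib]
    refine Finset.sum_congr rfl fun j _ => ?_
    rw [muCross, Finset.erase_right_comm (s := B) (a := k), map_neg]
    ring
  rw [muCross, hsum, hA, hAk, hsplit, map_neg]
  ring

theorem eval_muCross_nonneg (hsym : ∀ j k, lam j k = lam k j) (hnonpos : ∀ j k, lam j k ≤ 0)
    {A : Finset (Fin n)} {i k : Fin n} (hi : i ∈ A) (hk : k ∈ A) (hik : i ≠ k) (x : ℝ) :
    0 ≤ (muCross r lam A i k).eval x := by
  induction A using Finset.strongInduction generalizing i with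
  | _ A ih =>
  have hkB : k ∈ A.erase i := Finset.mem_erase.2 ⟨hik.symm, hk⟩
  rw [muCross_eq r hsym hi hk hik, eval_add, eval_finsetSum]
  refine add_nonneg ?_ (Finset.sum_nonneg fun j hj => ?_)
  · simpa using mul_nonneg (neg_nonneg.2 (hnonpos i k)) (sq_nonneg _)
  · obtain ⟨hjk, hjB⟩ := Finset.mem_erase.1 hj
    simpa using mul_nonneg (neg_nonneg.2 (hnonpos i j))
      (ih _ (Finset.erase_ssubset hi) hjB hkB hjk)

theorem neg_lam_mul_sq_le_eval_muCross (hsym : ∀ j k, lam j k = lam k j)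
    (hnonpos : ∀ j k, lam j k ≤ 0) {A : Finset (Fin n)} {i k : Fin n} (hi : i ∈ A) (hk : k ∈ A)
    (hik : i ≠ k) (x : ℝ) :
    -lam i k * (mu r lam ((A.erase i).erase k)).eval x ^ 2 ≤ (muCross r lam A i k).eval x := by
  rw [muCross_eq r hsym hi hk hik, eval_add, eval_finsetSum]
  have hkB : k ∈ A.erase i := Finset.mem_erase.2 ⟨hik.symm, hk⟩
  simpa using Finset.sum_nonneg fun j hj => mul_nonneg (neg_nonneg.2 (hnonpos i j))
    (eval_muCross_nonneg r hsym hnonpos (Finset.mem_of_mem_erase hj) hkB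
      (Finset.mem_erase.1 hj).1 x)

end MatchingPolynomial

theorem stmt_14_general (n : ℕ) (r : Fin n → ℝ) (lam : Fin n → Fin n → ℝ)
    (hsym : ∀ j k, lam j k = lam k j) (hnonpos : ∀ j k, lam j k ≤ 0)
    (hdiag : ∀ i, lam i i = 0) (θ : ℝ) (i : Fin n)
    (hi : i ∈ frontierZero r lam θ (Finset.univ : Finset (Fin n))) :
    (mu r lam (Finset.univ.erase i)).rootMultiplicity θ =
      (mu r lam (Finset.univ : Finset (Fin n))).rootMultiplicity θ + 1 := by
  obtain ⟨-, hi_ess, w, ⟨-, hw_ess⟩, hiw⟩ := hi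
  have hwi : i ≠ w := by rintro rfl; exact hiw (hdiag i)
  have hi' : i ∈ Finset.univ.erase w := Finset.mem_erase.2 ⟨hwi, Finset.mem_univ i⟩
  have hg_le := rootMultiplicity_mu_erase_le r hsym hnonpos (Finset.mem_univ i) θ
  have hf_le := rootMultiplicity_mu_le_erase r hsym hnonpos (Finset.mem_univ i) θ
  have hq_le := rootMultiplicity_mu_erase_le r hsym hnonpos hi' θ
  rw [Finset.erase_right_comm] at hq_le
  have hg_ne := rootMultiplicity_ne_of_sq_le_mul_sub_mul
    (neg_pos.2 ((hnonpos i w).lt_of_ne hiw)) (mu_ne_zero r hsym hnonpos _)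
    (mu_ne_zero r hsym hnonpos _) (mu_ne_zero r hsym hnonpos _) (mu_ne_zero r hsym hnonpos _)
    hw_ess (by omega)
    (neg_lam_mul_sq_le_eval_muCross r hsym hnonpos (Finset.mem_univ i) (Finset.mem_univ w) hwi)
  simp only [zeroSet, Set.mem_ofPred_eq, Finset.mem_univ, true_and] at hi_ess
  omega

/-- the frontier `∂0_{θ,G}` is contained in `∞_{θ,G}`: every vertex `i` that
is not θ-essential but has a θ-essential neighbor satisfies `m_θ(G∖i) = m_θ(G) + 1`. -/
theorem stmt_14 (n : ℕ) (hn : 0 < n) (r : Fin n → ℝ) (lam : Fin n → Fin n → ℝ)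
    (hsym : ∀ j k, lam j k = lam k j) (hnonpos : ∀ j k, lam j k ≤ 0)
    (hdiag : ∀ i, lam i i = 0) (θ : ℝ) (i : Fin n)
    (hi : i ∈ frontierZero r lam θ (Finset.univ : Finset (Fin n))) :
    (mu r lam (Finset.univ.erase i)).rootMultiplicity θ =
      (mu r lam (Finset.univ : Finset (Fin n))).rootMultiplicity θ + 1 :=
  stmt_14_general n r lam hsym hnonpos hdiag θ i hi
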